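/- arXiv:2511.14628 — 2 statements merged into one kernel-verified Lean document; each statement's English description precedes it below -/
import Mathlib

section
/- Let (E, d) be a metric space, C : E → ℝ an L-Lipschitz function attaining its minimum C* = min_{x ∈ E} C(x) at x* ∈ E, 𝒞 ⊆ E a finite set, r > 0, R ≥ 0, and for each φ ∈ 𝒞 let Ĉ(φ) ∈ ℝ satisfy |Ĉ(φ) − C(φ)| ≤ R. Suppose some ζ ∈ 𝒞 has d(ζ, x*) ≤ r. Let 𝒞_keep = {θ ∈ 𝒞 : Ĉ(θ) − R ≤ min_{φ ∈ 𝒞}(Ĉ(φ) + R) + L·r}. Then every kept center θ ∈ 𝒞_keep satisfies C(θ) ≤ C* + 2L·r + 4R, and every point x ∈ E with d(x, θ) ≤ r for some θ ∈ 𝒞_keep satisfies C(x) ≤ C* + 3L·r + 4R. -/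
/-!
Four estimate errors separate a kept center `θ` from the net point `ζ` near `x*`:
`C θ ≤ Ĉ θ + R ≤ Ĉ ζ + 3R + L·r ≤ C ζ + 4R + L·r`. The Lipschitz bound then costs one `L·r`
from `ζ` to `x*`, and one more from `θ` to any point of its ball.
-/

theorem le_add_mul_of_abs_sub_le_mul_dist {E : Type*} [PseudoMetricSpace E] {C : E → ℝ}
    {L r : ℝ} (hL : 0 ≤ L) (hLip : ∀ x y, |C x - C y| ≤ L * dist x y) {x y : E}
    (hxy : dist x y ≤ r) : C x ≤ C y + L * r := by
  have := (le_abs_self _).trans ((hLip x y).trans (mul_le_mul_of_nonneg_left hxy hL))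
  linarith

theorem Finset.le_add_of_sub_le_inf'_add {ι : Type*} {𝒞 : Finset ι} (hne : 𝒞.Nonempty)
    {C Chat : ι → ℝ} {R s : ℝ} (hacc : ∀ φ ∈ 𝒞, |Chat φ - C φ| ≤ R) {θ ζ : ι}
    (hθ : θ ∈ 𝒞) (hζ : ζ ∈ 𝒞) (hkeep : Chat θ - R ≤ 𝒞.inf' hne (fun φ => Chat φ + R) + s) :
    C θ ≤ C ζ + s + 4 * R := by
  have hθ' := abs_le.mp (hacc θ hθ)
  have hζ' := abs_le.mp (hacc ζ hζ)
  have hinf : 𝒞.inf' hne (fun φ => Chat φ + R) ≤ Chat ζ + R := 𝒞.inf'_le _ hζ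
  linarith [hθ'.1, hζ'.2]

theorem statement_13_general {E : Type*} [MetricSpace E]
    (C : E → ℝ) (L : ℝ) (hL : 0 ≤ L)
    (hLip : ∀ x y, |C x - C y| ≤ L * dist x y)
    (xstar : E)
    (𝒞 : Finset E) (hne : 𝒞.Nonempty)
    (r R : ℝ)
    (Chat : E → ℝ) (hacc : ∀ φ ∈ 𝒞, |Chat φ - C φ| ≤ R)
    (ζ : E) (hζ : ζ ∈ 𝒞) (hclose : dist ζ xstar ≤ r) :
    (∀ θ ∈ 𝒞, Chat θ - R ≤ 𝒞.inf' hne (fun φ => Chat φ + R) + L * r →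
        C θ ≤ C xstar + 2 * L * r + 4 * R)
    ∧ (∀ θ ∈ 𝒞, Chat θ - R ≤ 𝒞.inf' hne (fun φ => Chat φ + R) + L * r →
        ∀ x : E, dist x θ ≤ r → C x ≤ C xstar + 3 * L * r + 4 * R) := by
  have hζ_near := le_add_mul_of_abs_sub_le_mul_dist hL hLip hclose
  have center : ∀ θ ∈ 𝒞, Chat θ - R ≤ 𝒞.inf' hne (fun φ => Chat φ + R) + L * r →
      C θ ≤ C xstar + 2 * L * r + 4 * R := fun θ hθ hkeep => by
    linarith [Finset.le_add_of_sub_le_inf'_add hne hacc hθ hζ hkeep]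
  refine ⟨center, fun θ hθ hkeep x hx => ?_⟩
  linarith [center θ hθ hkeep, le_add_mul_of_abs_sub_le_mul_dist hL hLip hx]

/-- (Per-round accuracy of the survivor set.)
If `C` is `L`-Lipschitz with global minimum `C* = C(x*)` over `E`, estimates at net
points are accurate to within `R`, and some `ζ ∈ 𝒞` lies within `r` of `x*`, then
every kept center `θ` (i.e. `Ĉ(θ) − R ≤ min_{φ ∈ 𝒞}(Ĉ(φ) + R) + L·r`) satisfies
`C(θ) ≤ C* + 2L·r + 4R`, and every point within distance `r` of a kept center
satisfies `C(x) ≤ C* + 3L·r + 4R`. -/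
theorem statement_13 {E : Type*} [MetricSpace E]
    (C : E → ℝ) (L : ℝ) (hL : 0 ≤ L)
    (hLip : ∀ x y, |C x - C y| ≤ L * dist x y)
    (xstar : E) (hmin : ∀ y, C xstar ≤ C y)
    (𝒞 : Finset E) (hne : 𝒞.Nonempty)
    (r R : ℝ) (hr : 0 < r) (hR : 0 ≤ R)
    (Chat : E → ℝ) (hacc : ∀ φ ∈ 𝒞, |Chat φ - C φ| ≤ R)
    (ζ : E) (hζ : ζ ∈ 𝒞) (hclose : dist ζ xstar ≤ r) :
    (∀ θ ∈ 𝒞, Chat θ - R ≤ 𝒞.inf' hne (fun φ => Chat φ + R) + L * r →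
        C θ ≤ C xstar + 2 * L * r + 4 * R)
    ∧ (∀ θ ∈ 𝒞, Chat θ - R ≤ 𝒞.inf' hne (fun φ => Chat φ + R) + L * r →
        ∀ x : E, dist x θ ≤ r → C x ≤ C xstar + 3 * L * r + 4 * R) :=
  statement_13_general C L hL hLip xstar 𝒞 hne r R Chat hacc ζ hζ hclose
end

section
/- Let (𝕋, d) be a metric space and C : 𝕋 → ℝ an L-Lipschitz function attaining its global minimum C* at x* ∈ 𝕋. Let E^(1), …, E^(ℓ) ⊆ 𝕋 be subsets, and for each j let 𝒞^(j) ⊆ E^(j) be a finite set, r > 0, R ≥ 0, and Ĉ^(j)(φ) ∈ ℝ with |Ĉ^(j)(φ) − C(φ)| ≤ R for all φ ∈ 𝒞^(j). Suppose: (i) there is an index j_hit with x* ∈ E^(j_hit) and some ζ ∈ 𝒞^(j_hit) with d(ζ, x*) ≤ r; (ii) for each j, every point of the survivor set S^(j) ⊆ E^(j) is within distance r of some center θ ∈ 𝒞^(j) satisfying Ĉ^(j)(θ) − R ≤ min_{φ ∈ 𝒞^(j)}(Ĉ^(j)(φ) + R) + L·r. Define Ĉ_min = min_j min_{θ ∈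 𝒞^(j)} Ĉ^(j)(θ), β = L·r + 2R, and J_keep = {j : ∃ θ ∈ 𝒞^(j), Ĉ^(j)(θ) ≤ Ĉ_min + β}. Then: (1) |Ĉ_min − C*| ≤ L·r + R; (2) j_hit ∈ J_keep; (3) for every j ∈ J_keep, min_{x ∈ E^(j)} C(x) ≤ C* + 2L·r + 4R; and (4) every x ∈ ⋃_{j ∈ J_keep} S^(j) satisfies C(x) ≤ C* + 5L·r + 8R. -/
/-!
All estimates are within `R` of the true cost, which is at least `C*`, so `Ĉ_min ≥ C* − R`;
the net point `ζ` near `x*` gives `Ĉ_min ≤ Ĉ(ζ) ≤ C* + L·r + R`. A center witnessing that a flat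
is kept therefore has true cost within `L·r + 3R` of `Ĉ_min`, and a survivor lies within `r` of a
center whose estimate exceeds the flat's best estimate by at most `L·r + 2R`; Lipschitz continuity
converts these estimate gaps into the stated bounds on `C`.
-/

namespace Finset

variable {ι α β : Type*} [SemilatticeInf β] {s : Finset ι} {t : ι → Finset α}

theorem inf'_inf'_le (hs : s.Nonempty) (ht : ∀ i, (t i).Nonempty) (f : ι → α → β)
    {i : ι} {a : α} (hi : i ∈ s) (ha : a ∈ t i) :
    s.inf' hs (fun i => (t i).inf' (ht i) (f i)) ≤ f i a :=
  (inf'_le _ hi).trans (inf'_le _ ha)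

theorem le_inf'_inf' (hs : s.Nonempty) (ht : ∀ i, (t i).Nonempty) (f : ι → α → β) {c : β}
    (h : ∀ i ∈ s, ∀ a ∈ t i, c ≤ f i a) :
    c ≤ s.inf' hs (fun i => (t i).inf' (ht i) (f i)) :=
  le_inf' _ _ fun i hi => le_inf' _ _ (h i hi)

end Finset

theorem le_add_mul_of_dist_le {T : Type*} [PseudoMetricSpace T] {C : T → ℝ} {L r : ℝ}
    (hL : 0 ≤ L) (hLip : ∀ x y, |C x - C y| ≤ L * dist x y) {x y : T} (h : dist x y ≤ r) :
    C x ≤ C y + L * r := by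
  have := (abs_sub_le_iff.1 (hLip x y)).1
  nlinarith

theorem statement_17_general {T : Type*} [MetricSpace T]
    (C : T → ℝ) (L : ℝ) (hL : 0 ≤ L)
    (hLip : ∀ x y, |C x - C y| ≤ L * dist x y)
    (xstar : T) (hmin : ∀ y, C xstar ≤ C y)
    (ℓ : ℕ) (Eflat : Fin ℓ → Set T)
    (net : Fin ℓ → Finset T)
    (hnetsub : ∀ j, ↑(net j) ⊆ Eflat j)
    (hnetne : ∀ j, (net j).Nonempty)
    (r R : ℝ)
    (Chat : Fin ℓ → T → ℝ)
    (hacc : ∀ j, ∀ φ ∈ net j, |Chat j φ - C φ| ≤ R)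
    (S : Fin ℓ → Set T)
    (hsurv : ∀ j, ∀ x ∈ S j, ∃ θ ∈ net j, dist x θ ≤ r ∧
        Chat j θ - R ≤ (net j).inf' (hnetne j) (fun φ => Chat j φ + R) + L * r)
    (jhit : Fin ℓ)
    (ζ : T) (hζ : ζ ∈ net jhit) (hζclose : dist ζ xstar ≤ r) :
    ∃ Cmin : ℝ,
      Cmin = Finset.univ.inf' ⟨jhit, Finset.mem_univ jhit⟩
          (fun j => (net j).inf' (hnetne j) (Chat j)) ∧
      |Cmin - C xstar| ≤ L * r + R ∧
      (∃ θ ∈ net jhit, Chat jhit θ ≤ Cmin + (L * r + 2 * R)) ∧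
      (∀ j : Fin ℓ, (∃ θ ∈ net j, Chat j θ ≤ Cmin + (L * r + 2 * R)) →
        ∃ x ∈ Eflat j, C x ≤ C xstar + 2 * L * r + 4 * R) ∧
      (∀ j : Fin ℓ, (∃ θ ∈ net j, Chat j θ ≤ Cmin + (L * r + 2 * R)) →
        ∀ x ∈ S j, C x ≤ C xstar + 5 * L * r + 8 * R) := by
  set Cmin := Finset.univ.inf' ⟨jhit, Finset.mem_univ jhit⟩
      (fun j => (net j).inf' (hnetne j) (Chat j))
  have hacc' j φ (hφ : φ ∈ net j) := abs_sub_le_iff.1 (hacc j φ hφ)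
  have hlower : C xstar - R ≤ Cmin :=
    Finset.le_inf'_inf' _ hnetne Chat fun j _ θ hθ => by linarith [hmin θ, hacc' j θ hθ]
  have hζ_est : Chat jhit ζ ≤ C xstar + L * r + R := by
    linarith [hacc' jhit ζ hζ, le_add_mul_of_dist_le hL hLip hζclose]
  have hupper : Cmin ≤ Chat jhit ζ := Finset.inf'_inf'_le _ hnetne Chat (Finset.mem_univ _) hζ
  have hLr : 0 ≤ L * r := mul_nonneg hL (dist_nonneg.trans hζclose)
  refine ⟨Cmin, rfl, abs_le.2 ⟨by linarith, by linarith⟩, ⟨ζ, hζ, by linarith⟩, ?_, ?_⟩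
  · rintro j ⟨θ, hθ, hkeep⟩
    exact ⟨θ, hnetsub j hθ, by linarith [hacc' j θ hθ]⟩
  · rintro j ⟨θ', hθ', hkeep⟩ x hx
    obtain ⟨θ, hθ, hxθ, hband⟩ := hsurv j x hx
    have hbest := Finset.inf'_le (fun φ => Chat j φ + R) hθ'
    linarith [hacc' j θ hθ, le_add_mul_of_dist_le hL hLip hxθ]

/-- (Multi-flat selection guarantee of ALeT.)
On each flat `E^(j)` with terminal `r`-net `𝒞^(j)`, noisy estimates accurate to
within `R`, and survivor set `S^(j)` consisting of points within `r` of kept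
centers, suppose some flat `E^(j_hit)` contains the global minimizer `x*` together
with a net point `ζ` within distance `r` of it. With
`Ĉ_min = min_j min_{θ ∈ 𝒞^(j)} Ĉ^(j)(θ)` and selection band `β = L·r + 2R`:
(1) `|Ĉ_min − C*| ≤ L·r + R`; (2) the hitting flat is kept; (3) every kept flat
contains a point with `C ≤ C* + 2L·r + 4R`; and (4) every survivor point of a kept
flat satisfies `C ≤ C* + 5L·r + 8R`. -/
theorem statement_17 {T : Type*} [MetricSpace T]
    (C : T → ℝ) (L : ℝ) (hL : 0 ≤ L)
    (hLip : ∀ x y, |C x - C y| ≤ L * dist x y)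
    (xstar : T) (hmin : ∀ y, C xstar ≤ C y)
    (ℓ : ℕ) (Eflat : Fin ℓ → Set T)
    (net : Fin ℓ → Finset T)
    (hnetsub : ∀ j, ↑(net j) ⊆ Eflat j)
    (hnetne : ∀ j, (net j).Nonempty)
    (r R : ℝ) (hr : 0 < r) (hR : 0 ≤ R)
    (Chat : Fin ℓ → T → ℝ)
    (hacc : ∀ j, ∀ φ ∈ net j, |Chat j φ - C φ| ≤ R)
    (S : Fin ℓ → Set T) (hSsub : ∀ j, S j ⊆ Eflat j)
    (hsurv : ∀ j, ∀ x ∈ S j, ∃ θ ∈ net j, dist x θ ≤ r ∧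
        Chat j θ - R ≤ (net j).inf' (hnetne j) (fun φ => Chat j φ + R) + L * r)
    (jhit : Fin ℓ) (hhit : xstar ∈ Eflat jhit)
    (ζ : T) (hζ : ζ ∈ net jhit) (hζclose : dist ζ xstar ≤ r) :
    ∃ Cmin : ℝ,
      Cmin = Finset.univ.inf' ⟨jhit, Finset.mem_univ jhit⟩
          (fun j => (net j).inf' (hnetne j) (Chat j)) ∧
      |Cmin - C xstar| ≤ L * r + R ∧
      (∃ θ ∈ net jhit, Chat jhit θ ≤ Cmin + (L * r + 2 * R)) ∧
      (∀ j : Fin ℓ, (∃ θ ∈ net j, Chat j θ ≤ Cmin + (L * r + 2 * R)) →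
        ∃ x ∈ Eflat j, C x ≤ C xstar + 2 * L * r + 4 * R) ∧
      (∀ j : Fin ℓ, (∃ θ ∈ net j, Chat j θ ≤ Cmin + (L * r + 2 * R)) →
        ∀ x ∈ S j, C x ≤ C xstar + 5 * L * r + 8 * R) :=
  statement_17_general C L hL hLip xstar hmin ℓ Eflat net hnetsub hnetne r R Chat hacc S hsurv jhit
    ζ hζ hζclose
end
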